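/- Strict subadditivity of the constrained density against the pristine density: for every c ∈ (0,1], every s₁ > 0 and every s₂ ≥ 0, one has g_c(s₁ + s₂) < g₀(s₁) + g_c(s₂). -/

import Mathlib

/-!
Take near-optimal profiles `γa` for `g₀(s₁)` and `γb` for `g_c(s₂)` and put `h = c / 2`.
The energy of an admissible profile dominates its height. So if `γa` climbs above `1 - h`, the two
energies add up to more than `1 + c / 2`, while a full crack shows `g_c ≤ 1`.
Otherwise lift `γa` by `h` and splice it into `γb` at a time where `γb = h`. Since the energy
transforms well under affine changes of time, the spliced profile costs
`energy(s₂ + σ, γb) + energy(s₁ - σ, γa + h)`, where a small `σ > 0` keeps both time scales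
positive.
As `f₁` is strictly decreasing, lifting saves an amount of energy that depends only on `s₁`, `h` and
a bound on the energy of `γa`, and this beats the cost `σ ℓ` of the shift once `σ` is small.
-/

open MeasureTheory Set Filter

/-- Hypotheses on the function `f₁` from Section 6.1 of the paper. -/
structure F1Hyp (ℓ ℓ₁ : ℝ) (f₁ : ℝ → ℝ) : Prop where
  hl : 0 < ℓ
  hl1 : 0 < ℓ₁
  cont : ContinuousOn f₁ (Icc 0 1)
  diff : ∃ d : ℝ → ℝ, ContinuousOn d (Ioc 0 1) ∧
    ∀ t ∈ Ioc (0:ℝ) 1, HasDerivWithinAt f₁ (d t) (Ioc 0 1) t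
  anti : StrictAntiOn f₁ (Icc 0 1)
  nonneg : ∀ t ∈ Icc (0:ℝ) 1, 0 ≤ f₁ t
  f10 : f₁ 0 = ℓ
  f11 : f₁ 1 = 0
  convexSqrt : ConvexOn ℝ (Icc 0 1) (fun u => f₁ (Real.sqrt u))
  lim0 : Tendsto (fun s => (f₁ s - ℓ + ℓ₁ * s) / s) (nhdsWithin 0 (Ioi 0)) (nhds 0)

/-- `γ` is admissible, with a.e. derivative `γ'` (absolute continuity is encoded by the
fundamental theorem of calculus representation with an `L¹` derivative). -/
def Admissible (γ γ' : ℝ → ℝ) : Prop :=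
  IntegrableOn γ' (Icc 0 1) ∧
  (∀ t ∈ Icc (0:ℝ) 1, γ t = ∫ u in (0:ℝ)..t, γ' u) ∧
  (∀ t ∈ Icc (0:ℝ) 1, 0 ≤ γ t ∧ γ t ≤ 1) ∧
  γ 0 = 0 ∧ γ 1 = 0

/-- The energy in the characterization (6.11). -/
noncomputable def energy (f₁ : ℝ → ℝ) (s : ℝ) (γ γ' : ℝ → ℝ) : ℝ :=
  ∫ t in (0:ℝ)..1, Real.sqrt (s ^ 2 * (f₁ (Real.sqrt (γ t))) ^ 2 + (γ' t) ^ 2 / 4)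

/-- The cohesive energy density of pristine material, via characterization (6.11). -/
noncomputable def g0 (f₁ : ℝ → ℝ) (s : ℝ) : ℝ :=
  sInf {x | ∃ γ γ' : ℝ → ℝ, Admissible γ γ' ∧ x = energy f₁ s γ γ'}


/-- The constrained cohesive energy density `g_c` of (7.6): the infimum is restricted to
admissible profiles with `sup_{[0,1]} γ ≥ c`. -/
noncomputable def gc (f₁ : ℝ → ℝ) (c s : ℝ) : ℝ :=
  sInf {x | ∃ γ γ' : ℝ → ℝ, Admissible γ γ' ∧ c ≤ sSup (γ '' Icc (0:ℝ) 1) ∧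
    x = energy f₁ s γ γ'}

def IsPrimitiveOn (γ γ' : ℝ → ℝ) (a b : ℝ) : Prop :=
  IntervalIntegrable γ' volume a b ∧ ∀ t ∈ Icc a b, γ t = γ a + ∫ u in a..t, γ' u

lemma integral_comp_sub_div_div (g : ℝ → ℝ) {p : ℝ} (hp : p ≠ 0) (x s t : ℝ) :
    ∫ u in s..t, g ((u - x) / p) / p = ∫ u in (s - x) / p..(t - x) / p, g u := by
  simp only [intervalIntegral.integral_div, sub_div, intervalIntegral.integral_comp_div_sub _ hp,
    smul_eq_mul]
  field_simp

lemma IntervalIntegrable.mono_Icc {f : ℝ → ℝ} {a b s t : ℝ}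
    (hf : IntervalIntegrable f volume a b) (hs : s ∈ Icc a b) (ht : t ∈ Icc a b) :
    IntervalIntegrable f volume s t :=
  hf.mono_set (uIcc_subset_uIcc (Icc_subset_uIcc hs) (Icc_subset_uIcc ht))

lemma IntervalIntegrable.integral_add_adjacent {f : ℝ → ℝ} {a b c : ℝ}
    (hf : IntervalIntegrable f volume a c) (hb : b ∈ Icc a c) :
    (∫ t in a..b, f t) + ∫ t in b..c, f t = ∫ t in a..c, f t :=
  intervalIntegral.integral_add_adjacent_intervals
    (hf.mono_Icc ⟨le_rfl, hb.1.trans hb.2⟩ hb) (hf.mono_Icc hb ⟨hb.1.trans hb.2, le_rfl⟩)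

lemma sub_div_mem_Icc {p x a b t : ℝ} (hp : 0 < p) (ht : t ∈ Icc a b) :
    (t - x) / p ∈ Icc ((a - x) / p) ((b - x) / p) :=
  ⟨div_le_div_of_nonneg_right (by linarith [ht.1]) hp.le,
    div_le_div_of_nonneg_right (by linarith [ht.2]) hp.le⟩

namespace IsPrimitiveOn

variable {γ γ' δ δ' : ℝ → ℝ} {a b c : ℝ}

lemma sub_eq (h : IsPrimitiveOn γ γ' a b) {s t : ℝ} (hs : s ∈ Icc a b) (ht : t ∈ Icc a b) :
    γ t - γ s = ∫ u in s..t, γ' u := by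
  have ha : a ∈ Icc a b := ⟨le_rfl, hs.1.trans hs.2⟩
  rw [h.2 t ht, h.2 s hs, ← intervalIntegral.integral_interval_sub_left
    (h.1.mono_Icc ha ht) (h.1.mono_Icc ha hs)]
  ring

lemma continuousOn (h : IsPrimitiveOn γ γ' a b) : ContinuousOn γ (Icc a b) := by
  exact (((continuousOn_const (c := γ a)).add
    (intervalIntegral.continuousOn_primitive_interval' h.1 left_mem_uIcc)).mono
      Icc_subset_uIcc).congr h.2

lemma mono (h : IsPrimitiveOn γ γ' a b) {a' b' : ℝ} (ha' : a' ∈ Icc a b) (hb' : b' ∈ Icc a b) :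
    IsPrimitiveOn γ γ' a' b' := by
  refine ⟨h.1.mono_Icc ha' hb', fun t ht => ?_⟩
  rw [← h.sub_eq ha' ⟨ha'.1.trans ht.1, ht.2.trans hb'.2⟩]
  ring

lemma trans (h₁ : IsPrimitiveOn γ γ' a b) (h₂ : IsPrimitiveOn γ γ' b c) (hab : a ≤ b)
    (hbc : b ≤ c) : IsPrimitiveOn γ γ' a c := by
  refine ⟨h₁.1.trans h₂.1, fun t ht => ?_⟩
  rcases le_total t b with htb | hbt
  · exact h₁.2 t ⟨ht.1, htb⟩
  · rw [h₂.2 t ⟨hbt, ht.2⟩, h₁.2 b ⟨hab, le_rfl⟩, add_assoc,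
      intervalIntegral.integral_add_adjacent_intervals h₁.1
        (h₂.1.mono_Icc ⟨le_rfl, hbc⟩ ⟨hbt, ht.2⟩)]

lemma congr (h : IsPrimitiveOn γ γ' a b) (hab : a ≤ b) (hγ : EqOn δ γ (Icc a b))
    (hγ' : EqOn δ' γ' (Ioo a b)) : IsPrimitiveOn δ δ' a b := by
  refine ⟨h.1.congr_uIoo (by rw [uIoo_of_le hab]; exact hγ'.symm), fun t ht => ?_⟩
  rw [hγ ht, hγ ⟨le_rfl, hab⟩, h.2 t ht]
  congr 1
  refine (intervalIntegral.integral_congr_uIoo fun u hu => hγ' ?_).symm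
  rw [uIoo_of_le ht.1] at hu
  exact ⟨hu.1, hu.2.trans_le ht.2⟩

lemma add_const (h : IsPrimitiveOn γ γ' a b) (k : ℝ) :
    IsPrimitiveOn (fun t => γ t + k) γ' a b :=
  ⟨h.1, fun t ht => by simp only [h.2 t ht]; ring⟩

lemma comp_affine {p x : ℝ} (h : IsPrimitiveOn γ γ' ((a - x) / p) ((b - x) / p)) (hp : 0 < p) :
    IsPrimitiveOn (fun t => γ ((t - x) / p)) (fun t => γ' ((t - x) / p) / p) a b := by
  refine ⟨?_, fun t ht => ?_⟩
  · have := ((h.1.comp_mul_left (c := p⁻¹)).comp_sub_right x).div_const p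
    simp only [div_inv_eq_mul, inv_mul_eq_div] at this
    convert this using 1 <;> field_simp <;> ring
  · simp only
    rw [h.2 _ (sub_div_mem_Icc hp ht), integral_comp_sub_div_div _ hp.ne']

lemma ite (h₁ : IsPrimitiveOn γ γ' a b) (h₂ : IsPrimitiveOn δ δ' b c) (hab : a ≤ b)
    (hbc : b ≤ c) (hb : γ b = δ b) :
    IsPrimitiveOn (fun t => if t ≤ b then γ t else δ t)
      (fun t => if t ≤ b then γ' t else δ' t) a c := by
  refine IsPrimitiveOn.trans (b := b) ?_ ?_ hab hbc
  · exact h₁.congr hab (fun t ht => if_pos ht.2) (fun t ht => if_pos ht.2.le)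
  · refine h₂.congr hbc (fun t ht => ?_) (fun t ht => if_neg (not_le.2 ht.1))
    rcases ht.1.eq_or_lt with rfl | hlt
    · exact (if_pos le_rfl).trans hb
    · exact if_neg (not_le.2 hlt)

end IsPrimitiveOn

lemma isPrimitiveOn_of_eq_affine {γ : ℝ → ℝ} {α β : ℝ} (hγ : ∀ t, γ t = α * t + β) (a b : ℝ) :
    IsPrimitiveOn γ (fun _ => α) a b :=
  ⟨intervalIntegrable_const, fun t _ => by
    rw [intervalIntegral.integral_const, smul_eq_mul, hγ, hγ]; ring⟩

lemma sqrt_sq_add_sq_le (x y : ℝ) : √(x ^ 2 + y ^ 2) ≤ |x| + |y| := by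
  rw [Real.sqrt_le_left (by positivity)]
  nlinarith [sq_abs x, sq_abs y, mul_nonneg (abs_nonneg x) (abs_nonneg y)]

lemma sqrt_add_sq_mul_add_le {s σ y : ℝ} (a : ℝ) (hσ : 0 ≤ σ) (hy : 0 ≤ y) :
    √((s + σ) ^ 2 * a ^ 2 + y) ≤ √(s ^ 2 * a ^ 2 + y) + σ * |a| := by
  have hsa : s * |a| ≤ √(s ^ 2 * a ^ 2 + y) :=
    Real.le_sqrt_of_sq_le (by nlinarith [sq_abs a])
  rw [Real.sqrt_le_left (by positivity)]
  nlinarith [Real.sq_sqrt (show 0 ≤ s ^ 2 * a ^ 2 + y by positivity), sq_abs a,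
    mul_le_mul_of_nonneg_left hsa (mul_nonneg hσ (abs_nonneg a))]

/-- With `u = √(s²a² + y)` and `v = √(s²b² + y)`, `u² - v² ≥ s²δ` and `u + v ≤ 2u` give
`u - v ≥ s²δ / (2u)`, and `1 / (2u)` is bounded below by its tangent line at `u = M`. -/
lemma sqrt_add_gain_le_sqrt {s a b y δ M : ℝ} (hy : 0 ≤ y) (hδ : 0 ≤ δ)
    (hab : δ ≤ a ^ 2 - b ^ 2) (hM : 0 < M) :
    √(s ^ 2 * b ^ 2 + y) + s ^ 2 * δ / (2 * M ^ 2) * (2 * M - √(s ^ 2 * a ^ 2 + y))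
      ≤ √(s ^ 2 * a ^ 2 + y) := by
  set u := √(s ^ 2 * a ^ 2 + y)
  set v := √(s ^ 2 * b ^ 2 + y)
  have hu2 : u ^ 2 = s ^ 2 * a ^ 2 + y := Real.sq_sqrt (by positivity)
  have hv2 : v ^ 2 = s ^ 2 * b ^ 2 + y := Real.sq_sqrt (by positivity)
  have hv : 0 ≤ v := Real.sqrt_nonneg _
  have hvu : v ≤ u := Real.sqrt_le_sqrt (by nlinarith [sq_nonneg s])
  have hsδ : 0 ≤ s ^ 2 * δ := by positivity
  have hgain : s ^ 2 * δ ≤ 2 * u * (u - v) := by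
    nlinarith [mul_le_mul_of_nonneg_left hab (sq_nonneg s)]
  have key : s ^ 2 * δ * (2 * M - u) ≤ 2 * M ^ 2 * (u - v) := by
    rcases le_total (2 * M) u with h | h
    · nlinarith [mul_nonneg hsδ (sub_nonneg.2 h)]
    · calc s ^ 2 * δ * (2 * M - u) ≤ 2 * u * (u - v) * (2 * M - u) :=
            mul_le_mul_of_nonneg_right hgain (by linarith)
        _ = 2 * (u - v) * (u * (2 * M - u)) := by ring
        _ ≤ 2 * (u - v) * M ^ 2 :=
            mul_le_mul_of_nonneg_left (by nlinarith [sq_nonneg (M - u)]) (by linarith)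
        _ = 2 * M ^ 2 * (u - v) := by ring
  rw [div_mul_eq_mul_div, ← le_sub_iff_add_le', div_le_iff₀ (by positivity)]
  linarith

noncomputable def energyDensity (f₁ : ℝ → ℝ) (s : ℝ) (γ γ' : ℝ → ℝ) (t : ℝ) : ℝ :=
  √(s ^ 2 * f₁ √(γ t) ^ 2 + γ' t ^ 2 / 4)

lemma energy_eq_integral (f₁ : ℝ → ℝ) (s : ℝ) (γ γ' : ℝ → ℝ) :
    energy f₁ s γ γ' = ∫ t in (0:ℝ)..1, energyDensity f₁ s γ γ' t := rfl

section EnergyDensity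

variable {f₁ γ γ' : ℝ → ℝ} {s : ℝ}

lemma energyDensity_nonneg (t : ℝ) : 0 ≤ energyDensity f₁ s γ γ' t := Real.sqrt_nonneg _

lemma abs_div_two_le_energyDensity (t : ℝ) : |γ' t| / 2 ≤ energyDensity f₁ s γ γ' t := by
  have : |γ' t / 2| ≤ energyDensity f₁ s γ γ' t :=
    Real.abs_le_sqrt (by nlinarith [sq_nonneg (s * f₁ √(γ t))])
  rwa [abs_div, abs_two] at this

lemma energyDensity_le (t : ℝ) :
    energyDensity f₁ s γ γ' t ≤ |s * f₁ √(γ t)| + |γ' t| / 2 := by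
  have := sqrt_sq_add_sq_le (s * f₁ √(γ t)) (γ' t / 2)
  rw [abs_div, abs_two] at this
  unfold energyDensity
  convert this using 2
  ring

end EnergyDensity

lemma sqrt_mem_Icc {x : ℝ} (hx : x ∈ Icc (0:ℝ) 1) : √x ∈ Icc (0:ℝ) 1 :=
  ⟨Real.sqrt_nonneg x, Real.sqrt_le_one.2 hx.2⟩

namespace F1Hyp

variable {ℓ ℓ₁ : ℝ} {f₁ : ℝ → ℝ}

lemma comp_sqrt_mem_Icc (hf : F1Hyp ℓ ℓ₁ f₁) {x : ℝ} (hx : x ∈ Icc (0:ℝ) 1) :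
    f₁ √x ∈ Icc 0 ℓ := by
  have hx' := sqrt_mem_Icc hx
  exact ⟨hf.nonneg _ hx', hf.f10 ▸ hf.anti.antitoneOn ⟨le_rfl, zero_le_one⟩ hx' hx'.1⟩

lemma exists_pos_le_sq_sub_sq (hf : F1Hyp ℓ ℓ₁ f₁) {h : ℝ} (hh : 0 < h) (hh1 : h ≤ 1) :
    ∃ δ > 0, ∀ x ∈ Icc (0:ℝ) (1 - h), δ ≤ f₁ √x ^ 2 - f₁ √(x + h) ^ 2 := by
  have hx : ∀ x ∈ Icc (0:ℝ) (1 - h), x ∈ Icc (0:ℝ) 1 := fun x hx => ⟨hx.1, by linarith [hx.2]⟩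
  have hxh : ∀ x ∈ Icc (0:ℝ) (1 - h), x + h ∈ Icc (0:ℝ) 1 :=
    fun x hx => ⟨by linarith [hx.1], by linarith [hx.2]⟩
  have hcont : ContinuousOn (fun x => f₁ √x ^ 2 - f₁ √(x + h) ^ 2) (Icc 0 (1 - h)) :=
    ((hf.cont.comp Real.continuous_sqrt.continuousOn fun x hx' => sqrt_mem_Icc (hx x hx')).pow
      2).sub ((hf.cont.comp (by fun_prop) fun x hx' => sqrt_mem_Icc (hxh x hx')).pow 2)
  obtain ⟨x₀, hx₀, hmin⟩ := isCompact_Icc.exists_isMinOn ⟨0, le_rfl, by linarith⟩ hcont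
  refine ⟨_, ?_, fun x hx' => hmin hx'⟩
  have hlt : f₁ √(x₀ + h) < f₁ √x₀ := hf.anti (sqrt_mem_Icc (hx x₀ hx₀))
    (sqrt_mem_Icc (hxh x₀ hx₀)) (Real.sqrt_lt_sqrt hx₀.1 (by linarith))
  have h0 := (hf.comp_sqrt_mem_Icc (hxh x₀ hx₀)).1
  show 0 < f₁ √x₀ ^ 2 - f₁ √(x₀ + h) ^ 2
  nlinarith

end F1Hyp

section Energy

variable {f₁ γ γ' : ℝ → ℝ}

lemma IsPrimitiveOn.intervalIntegrable_energyDensity (hf : ContinuousOn f₁ (Icc 0 1))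
    {a b : ℝ} (h : IsPrimitiveOn γ γ' a b) (hab : a ≤ b) (hγ : MapsTo γ (Icc a b) (Icc 0 1))
    (s : ℝ) : IntervalIntegrable (energyDensity f₁ s γ γ') volume a b := by
  have hF : ContinuousOn (fun t => f₁ √(γ t)) (Icc a b) :=
    hf.comp (Real.continuous_sqrt.comp_continuousOn h.continuousOn)
      fun t ht => sqrt_mem_Icc (hγ ht)
  have hFm : AEStronglyMeasurable (fun t => f₁ √(γ t)) (volume.restrict (uIoc a b)) := by
    rw [uIoc_of_le hab]
    exact (hF.mono Ioc_subset_Icc_self).aestronglyMeasurable measurableSet_Ioc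
  refine IntervalIntegrable.mono_fun'
    (((hF.intervalIntegrable_of_Icc hab).const_mul s).abs.add (h.1.abs.div_const 2))
    (Continuous.comp_aestronglyMeasurable₂ (g := fun x y => √(s ^ 2 * x ^ 2 + y ^ 2 / 4))
      (by fun_prop) hFm h.1.def'.aestronglyMeasurable) ?_
  filter_upwards with t
  rw [Real.norm_eq_abs, abs_of_nonneg (energyDensity_nonneg t)]
  exact energyDensity_le t

variable {a b s : ℝ}

lemma IsPrimitiveOn.abs_sub_le_integral_energyDensity (hf : ContinuousOn f₁ (Icc 0 1))
    (h : IsPrimitiveOn γ γ' a b) (hγ : MapsTo γ (Icc a b) (Icc 0 1)) {t₁ t₂ : ℝ}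
    (ht₁ : t₁ ∈ Icc a b) (ht₂ : t₂ ∈ Icc a b) (ht : t₁ ≤ t₂) (s : ℝ) :
    |γ t₂ - γ t₁| ≤ 2 * ∫ t in t₁..t₂, energyDensity f₁ s γ γ' t := by
  have h' := h.mono ht₁ ht₂
  rw [h.sub_eq ht₁ ht₂, ← intervalIntegral.integral_const_mul]
  refine (intervalIntegral.abs_integral_le_integral_abs ht).trans
    (intervalIntegral.integral_mono_on ht h'.1.abs ((h'.intervalIntegrable_energyDensity hf ht
      (hγ.mono_left (Icc_subset_Icc ht₁.1 ht₂.2)) s).const_mul 2) fun t _ => ?_)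
  linarith [abs_div_two_le_energyDensity (f₁ := f₁) (s := s) (γ := γ) (γ' := γ') t]

lemma energy_le_energy_of_le (hf : ContinuousOn f₁ (Icc 0 1)) (hγ : IsPrimitiveOn γ γ' 0 1)
    (hmaps : MapsTo γ (Icc 0 1) (Icc 0 1)) {s' : ℝ} (hs' : 0 ≤ s') (hs : s' ≤ s) :
    energy f₁ s' γ γ' ≤ energy f₁ s γ γ' :=
  intervalIntegral.integral_mono_on zero_le_one
    (hγ.intervalIntegrable_energyDensity hf zero_le_one hmaps s')
    (hγ.intervalIntegrable_energyDensity hf zero_le_one hmaps s) fun t _ =>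
    Real.sqrt_le_sqrt (by gcongr)

lemma energy_add_le {ℓ ℓ₁ : ℝ} (hf : F1Hyp ℓ ℓ₁ f₁) (hγ : IsPrimitiveOn γ γ' 0 1)
    (hmaps : MapsTo γ (Icc 0 1) (Icc 0 1)) {σ : ℝ} (hσ : 0 ≤ σ) :
    energy f₁ (s + σ) γ γ' ≤ energy f₁ s γ γ' + σ * ℓ := by
  have hI := hγ.intervalIntegrable_energyDensity hf.cont zero_le_one hmaps
  calc energy f₁ (s + σ) γ γ' ≤ ∫ t in (0:ℝ)..1, (energyDensity f₁ s γ γ' t + σ * ℓ) := by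
        refine intervalIntegral.integral_mono_on zero_le_one (hI _)
          ((hI s).add intervalIntegrable_const) fun t ht => ?_
        have hF := hf.comp_sqrt_mem_Icc (hmaps ht)
        refine (sqrt_add_sq_mul_add_le _ hσ (by positivity)).trans ?_
        rw [abs_of_nonneg hF.1]
        exact add_le_add le_rfl (mul_le_mul_of_nonneg_left hF.2 hσ)
    _ = energy f₁ s γ γ' + σ * ℓ := by
        rw [intervalIntegral.integral_add (hI s) intervalIntegrable_const,
          intervalIntegral.integral_const, energy_eq_integral]
        simp

lemma energy_add_const_add_le (hf : ContinuousOn f₁ (Icc 0 1)) (hγ : IsPrimitiveOn γ γ' 0 1)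
    {h : ℝ} (hh : 0 ≤ h) (hmaps : MapsTo γ (Icc 0 1) (Icc 0 (1 - h))) {δ M : ℝ} (hδ : 0 ≤ δ)
    (hgap : ∀ t ∈ Icc (0:ℝ) 1, δ ≤ f₁ √(γ t) ^ 2 - f₁ √(γ t + h) ^ 2) (hM : 0 < M)
    (hE : energy f₁ s γ γ' ≤ M) :
    energy f₁ s (fun t => γ t + h) γ' + s ^ 2 * δ / (2 * M) ≤ energy f₁ s γ γ' := by
  set k := s ^ 2 * δ / (2 * M ^ 2)
  have hI := hγ.intervalIntegrable_energyDensity hf zero_le_one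
    (hmaps.mono_right (Icc_subset_Icc_right (by linarith))) s
  have hI' := (hγ.add_const h).intervalIntegrable_energyDensity hf zero_le_one
    (fun t ht => ⟨by linarith [(hmaps ht).1], by linarith [(hmaps ht).2]⟩) s
  have hint : energy f₁ s (fun t => γ t + h) γ' + k * (2 * M - energy f₁ s γ γ')
      ≤ energy f₁ s γ γ' := by
    calc _ = ∫ t in (0:ℝ)..1, (energyDensity f₁ s (fun t => γ t + h) γ' t
            + k * (2 * M - energyDensity f₁ s γ γ' t)) := by
          rw [intervalIntegral.integral_add hI' ((intervalIntegrable_const.sub hI).const_mul k),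
            intervalIntegral.integral_const_mul, intervalIntegral.integral_sub
              intervalIntegrable_const hI, intervalIntegral.integral_const]
          simp [energy_eq_integral]
      _ ≤ energy f₁ s γ γ' :=
          intervalIntegral.integral_mono_on zero_le_one
            (hI'.add ((intervalIntegrable_const.sub hI).const_mul k)) hI
            fun t ht => sqrt_add_gain_le_sqrt (by positivity) hδ (hgap t ht) hM
  have hk : s ^ 2 * δ / (2 * M) ≤ k * (2 * M - energy f₁ s γ γ') := by
    calc s ^ 2 * δ / (2 * M) = k * M := by simp only [k]; field_simp
      _ ≤ _ := mul_le_mul_of_nonneg_left (by linarith) (by positivity)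
  linarith

lemma IsPrimitiveOn.integral_energyDensity_le {ℓ ℓ₁ L : ℝ}
    (hf : F1Hyp ℓ ℓ₁ f₁) (h : IsPrimitiveOn γ γ' a b) (hab : a ≤ b)
    (hγ : MapsTo γ (Icc a b) (Icc 0 1)) (hL : ∀ t ∈ Icc a b, |γ' t| ≤ L) (s : ℝ) :
    ∫ t in a..b, energyDensity f₁ s γ γ' t ≤ (b - a) * (|s| * ℓ + L / 2) := by
  refine (intervalIntegral.integral_mono_on hab
    (h.intervalIntegrable_energyDensity hf.cont hab hγ s)
    (intervalIntegrable_const (c := |s| * ℓ + L / 2))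
    fun t ht => (energyDensity_le t).trans ?_).trans_eq
    (by rw [intervalIntegral.integral_const, smul_eq_mul])
  have hF := hf.comp_sqrt_mem_Icc (hγ ht)
  rw [abs_mul, abs_of_nonneg hF.1]
  gcongr
  exacts [hF.2, hL t ht]

lemma energy_nonneg : 0 ≤ energy f₁ s γ γ' :=
  intervalIntegral.integral_nonneg zero_le_one fun t _ => energyDensity_nonneg t

end Energy

namespace Admissible

variable {f₁ γ γ' : ℝ → ℝ}

lemma isPrimitiveOn (h : Admissible γ γ') : IsPrimitiveOn γ γ' 0 1 :=
  ⟨(intervalIntegrable_iff_integrableOn_Icc_of_le zero_le_one).2 h.1, fun t ht => by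
    rw [h.2.2.2.1, zero_add]; exact h.2.1 t ht⟩

lemma mapsTo (h : Admissible γ γ') : MapsTo γ (Icc 0 1) (Icc 0 1) := h.2.2.1

lemma le_energy (hf : ContinuousOn f₁ (Icc 0 1)) (h : Admissible γ γ') {t : ℝ}
    (ht : t ∈ Icc (0:ℝ) 1) (s : ℝ) : γ t ≤ energy f₁ s γ γ' := by
  have h0 : (0:ℝ) ∈ Icc (0:ℝ) 1 := ⟨le_rfl, zero_le_one⟩
  have h1 : (1:ℝ) ∈ Icc (0:ℝ) 1 := ⟨zero_le_one, le_rfl⟩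
  have hI := h.isPrimitiveOn.intervalIntegrable_energyDensity hf zero_le_one h.mapsTo s
  have hup := h.isPrimitiveOn.abs_sub_le_integral_energyDensity hf h.mapsTo h0 ht ht.1 s
  have hdown := h.isPrimitiveOn.abs_sub_le_integral_energyDensity hf h.mapsTo ht h1 ht.2 s
  rw [h.2.2.2.1, sub_zero] at hup
  rw [h.2.2.2.2, zero_sub, abs_neg] at hdown
  rw [energy_eq_integral, ← hI.integral_add_adjacent ht]
  linarith [le_abs_self (γ t)]

lemma le_sSup_image_iff (h : Admissible γ γ') {c : ℝ} :
    c ≤ sSup (γ '' Icc 0 1) ↔ ∃ t ∈ Icc (0:ℝ) 1, c ≤ γ t := by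
  have hbdd : BddAbove (γ '' Icc 0 1) := ⟨1, by rintro _ ⟨t, ht, rfl⟩; exact (h.mapsTo ht).2⟩
  constructor
  · intro hc
    obtain ⟨t, ht, hmax⟩ := (isCompact_Icc.image_of_continuousOn
      h.isPrimitiveOn.continuousOn).sSup_mem ⟨γ 0, 0, ⟨le_rfl, zero_le_one⟩, rfl⟩
    exact ⟨t, ht, hmax ▸ hc⟩
  · rintro ⟨t, ht, hc⟩
    exact le_csSup_of_le hbdd ⟨t, ht, rfl⟩ hc

lemma exists_eq (h : Admissible γ γ') {t y : ℝ} (ht : t ∈ Icc (0:ℝ) 1)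
    (hy : y ∈ Icc 0 (γ t)) : ∃ t₀ ∈ Icc (0:ℝ) 1, γ t₀ = y := by
  obtain ⟨t₀, ht₀, rfl⟩ := intermediate_value_Icc ht.1
    (h.isPrimitiveOn.continuousOn.mono (Icc_subset_Icc_right ht.2)) (h.2.2.2.1.symm ▸ hy)
  exact ⟨t₀, ⟨ht₀.1, ht₀.2.trans ht.2⟩, rfl⟩

end Admissible

lemma IsPrimitiveOn.admissible {γ γ' : ℝ → ℝ} (h : IsPrimitiveOn γ γ' 0 1)
    (hmaps : MapsTo γ (Icc 0 1) (Icc 0 1)) (h0 : γ 0 = 0) (h1 : γ 1 = 0) : Admissible γ γ' :=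
  ⟨(intervalIntegrable_iff_integrableOn_Icc_of_le zero_le_one).1 h.1,
    fun t ht => by rw [h.2 t ht, h0, zero_add], hmaps, h0, h1⟩

noncomputable def crackProfile (δ t : ℝ) : ℝ :=
  if t ≤ δ then t / δ else if t ≤ 1 - δ then 1 else (1 - t) / δ

noncomputable def crackSlope (δ t : ℝ) : ℝ :=
  if t ≤ δ then 1 / δ else if t ≤ 1 - δ then 0 else -(1 / δ)

section Crack

variable {δ : ℝ}

lemma isPrimitiveOn_crackProfile (hδ : 0 < δ) (hδ' : δ ≤ 1 / 2) :
    IsPrimitiveOn (crackProfile δ) (crackSlope δ) 0 1 := by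
  have up : IsPrimitiveOn (fun t => t / δ) (fun _ => 1 / δ) 0 δ :=
    isPrimitiveOn_of_eq_affine (β := 0) (fun t => by ring) _ _
  have flat : IsPrimitiveOn (fun _ => 1) (fun _ => 0) δ (1 - δ) :=
    isPrimitiveOn_of_eq_affine (β := 1) (fun t => by ring) _ _
  have down : IsPrimitiveOn (fun t => (1 - t) / δ) (fun _ => -(1 / δ)) (1 - δ) 1 :=
    isPrimitiveOn_of_eq_affine (β := 1 / δ) (fun t => by ring) _ _
  exact up.ite (flat.ite down (by linarith) (by linarith) (by field_simp; ring)) hδ.le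
    (by linarith) (by simp [hδ.ne', show δ ≤ 1 - δ by linarith])

lemma crackProfile_mem_Icc (hδ : 0 < δ) (t : ℝ) (ht : t ∈ Icc (0:ℝ) 1) :
    crackProfile δ t ∈ Icc (0:ℝ) 1 := by
  unfold crackProfile
  split_ifs with h₁ h₂
  · exact ⟨div_nonneg ht.1 hδ.le, (div_le_one hδ).2 h₁⟩
  · exact ⟨zero_le_one, le_rfl⟩
  · exact ⟨div_nonneg (by linarith [ht.2]) hδ.le, (div_le_one hδ).2 (by linarith)⟩

lemma admissible_crackProfile (hδ : 0 < δ) (hδ' : δ ≤ 1 / 2) :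
    Admissible (crackProfile δ) (crackSlope δ) :=
  (isPrimitiveOn_crackProfile hδ hδ').admissible (crackProfile_mem_Icc hδ)
    (by simp [crackProfile, hδ.le])
    (by simp [crackProfile, show ¬(1:ℝ) ≤ δ by linarith, show ¬(1:ℝ) ≤ 1 - δ by linarith])

lemma crackProfile_self (hδ : 0 < δ) : crackProfile δ δ = 1 := by
  simp [crackProfile, hδ.ne']

lemma abs_crackSlope_le (hδ : 0 < δ) (t : ℝ) : |crackSlope δ t| ≤ 1 / δ := by
  unfold crackSlope
  split_ifs <;> simp [abs_of_pos hδ, hδ.le]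

lemma energy_crackProfile_le {ℓ ℓ₁ : ℝ} {f₁ : ℝ → ℝ} (hf : F1Hyp ℓ ℓ₁ f₁) (hδ : 0 < δ)
    (hδ' : δ ≤ 1 / 2) (s : ℝ) :
    energy f₁ s (crackProfile δ) (crackSlope δ) ≤ 1 + 2 * δ * |s| * ℓ := by
  have h := admissible_crackProfile hδ hδ'
  have hI := h.isPrimitiveOn.intervalIntegrable_energyDensity hf.cont zero_le_one h.mapsTo s
  have hδ₁ : δ ∈ Icc (0:ℝ) 1 := ⟨hδ.le, by linarith⟩
  have hδ₂ : 1 - δ ∈ Icc (0:ℝ) 1 := ⟨by linarith, by linarith⟩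
  have ramp : ∀ a ∈ Icc (0:ℝ) 1, ∀ b ∈ Icc (0:ℝ) 1, b - a = δ →
      ∫ t in a..b, energyDensity f₁ s (crackProfile δ) (crackSlope δ) t ≤ δ * |s| * ℓ + 1 / 2 := by
    intro a ha b hb hab
    refine ((h.isPrimitiveOn.mono ha hb).integral_energyDensity_le hf (by linarith)
      (h.mapsTo.mono_left (Icc_subset_Icc ha.1 hb.2)) (fun t _ => abs_crackSlope_le hδ t) s
      ).trans_eq ?_
    rw [hab]
    field_simp
  have flat : ∫ t in δ..1 - δ, energyDensity f₁ s (crackProfile δ) (crackSlope δ) t = 0 := by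
    refine (intervalIntegral.integral_congr_uIoo fun t ht => ?_).trans
      intervalIntegral.integral_zero
    rw [uIoo_of_le (by linarith)] at ht
    simp [energyDensity, crackProfile, crackSlope, not_le.2 ht.1, ht.2.le, hf.f11]
  rw [energy_eq_integral, ← hI.integral_add_adjacent hδ₂,
    ← (hI.mono_Icc ⟨le_rfl, zero_le_one⟩ hδ₂).integral_add_adjacent ⟨hδ.le, by linarith⟩, flat]
  linarith [ramp 0 ⟨le_rfl, zero_le_one⟩ δ hδ₁ (sub_zero δ),
    ramp (1 - δ) hδ₂ 1 ⟨zero_le_one, le_rfl⟩ (by ring)]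

end Crack

section Densities

variable {ℓ ℓ₁ : ℝ} {f₁ γ γ' : ℝ → ℝ} {c s : ℝ}

lemma gc_le_energy (h : Admissible γ γ') {t : ℝ} (ht : t ∈ Icc (0:ℝ) 1) (hc : c ≤ γ t) (s : ℝ) :
    gc f₁ c s ≤ energy f₁ s γ γ' :=
  csInf_le ⟨0, by rintro _ ⟨_, _, -, -, rfl⟩; exact energy_nonneg⟩
    ⟨γ, γ', h, h.le_sSup_image_iff.2 ⟨t, ht, hc⟩, rfl⟩

lemma gc_le_one (hf : F1Hyp ℓ ℓ₁ f₁) (hc : c ≤ 1) (hs : 0 ≤ s) : gc f₁ c s ≤ 1 := by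
  refine le_of_forall_pos_le_add fun ε hε => ?_
  have hsℓ : 0 ≤ s * ℓ := mul_nonneg hs hf.hl.le
  set δ := min (1 / 2) (ε / (2 * (s * ℓ + 1)))
  have hδ : 0 < δ := lt_min (by norm_num) (by positivity)
  refine (gc_le_energy (admissible_crackProfile hδ (min_le_left _ _))
    ⟨hδ.le, (min_le_left _ _).trans (by norm_num)⟩ ((crackProfile_self hδ).symm ▸ hc) s).trans
    ((energy_crackProfile_le hf hδ (min_le_left _ _) s).trans ?_)
  rw [abs_of_nonneg hs]
  have : δ * (2 * (s * ℓ + 1)) ≤ ε := (le_div_iff₀ (by positivity)).1 (min_le_right _ _)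
  nlinarith

lemma g0_nonneg : 0 ≤ g0 f₁ s :=
  le_csInf ⟨_, _, _, admissible_crackProfile one_half_pos le_rfl, rfl⟩
    fun _ ⟨_, _, _, hx⟩ => hx ▸ energy_nonneg

lemma exists_admissible_energy_lt_g0_add {ε : ℝ} (hε : 0 < ε) :
    ∃ γ γ', Admissible γ γ' ∧ energy f₁ s γ γ' < g0 f₁ s + ε := by
  have hlt : g0 f₁ s < g0 f₁ s + ε := lt_add_of_pos_right _ hε
  unfold g0 at hlt
  obtain ⟨_, ⟨γ, γ', h, rfl⟩, hlt⟩ := exists_lt_of_csInf_lt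
    (by exact ⟨_, _, _, admissible_crackProfile one_half_pos le_rfl, rfl⟩) hlt
  exact ⟨γ, γ', h, hlt⟩

lemma exists_admissible_energy_lt_gc_add (hc : c ≤ 1) {ε : ℝ} (hε : 0 < ε) :
    ∃ γ γ', Admissible γ γ' ∧ (∃ t ∈ Icc (0:ℝ) 1, c ≤ γ t) ∧ energy f₁ s γ γ' < gc f₁ c s + ε := by
  have hcrack := admissible_crackProfile one_half_pos le_rfl
  have hlt : gc f₁ c s < gc f₁ c s + ε := lt_add_of_pos_right _ hε
  unfold gc at hlt
  obtain ⟨_, ⟨γ, γ', h, hsup, rfl⟩, hlt⟩ := exists_lt_of_csInf_lt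
    (by exact ⟨_, _, _, hcrack, hcrack.le_sSup_image_iff.2 ⟨1 / 2, ⟨by norm_num, by norm_num⟩,
      (crackProfile_self one_half_pos).symm ▸ hc⟩, rfl⟩) hlt
  exact ⟨γ, γ', h, h.le_sSup_image_iff.1 hsup, hlt⟩

end Densities

section Splice

variable {f₁ : ℝ → ℝ}

lemma energyDensity_comp_affine (γ γ' : ℝ → ℝ) (S : ℝ) {p : ℝ} (hp : 0 < p) (x t : ℝ) :
    energyDensity f₁ S (fun t => γ ((t - x) / p)) (fun t => γ' ((t - x) / p) / p) t =
      energyDensity f₁ (S * p) γ γ' ((t - x) / p) / p := by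
  have key : ∀ A : ℝ, √A * p = √(A * p ^ 2) := fun A => by
    rw [Real.sqrt_mul' _ (sq_nonneg p), Real.sqrt_sq hp.le]
  unfold energyDensity
  rw [eq_div_iff hp.ne', key]
  congr 1
  field_simp

lemma integral_energyDensity_eq_of_eqOn_comp_affine {Γ Γ' γ γ' : ℝ → ℝ} {a b p x : ℝ}
    (hp : 0 < p) (hab : a ≤ b) (hΓ : ∀ t ∈ Ioo a b, Γ t = γ ((t - x) / p))
    (hΓ' : ∀ t ∈ Ioo a b, Γ' t = γ' ((t - x) / p) / p) (S : ℝ) :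
    ∫ t in a..b, energyDensity f₁ S Γ Γ' t =
      ∫ t in (a - x) / p..(b - x) / p, energyDensity f₁ (S * p) γ γ' t := by
  rw [← integral_comp_sub_div_div _ hp.ne']
  refine intervalIntegral.integral_congr_uIoo fun t ht => ?_
  rw [uIoo_of_le hab] at ht
  rw [← energyDensity_comp_affine γ γ' S hp]
  simp only [energyDensity, hΓ t ht, hΓ' t ht]

/-- `γ` run at speed `1 / p`, with `η` run at speed `1 / ρ` inserted at time `t₀` of `γ`. -/
noncomputable def splice (γ η : ℝ → ℝ) (t₀ p ρ t : ℝ) : ℝ :=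
  if t ≤ p * t₀ then γ (t / p) else if t ≤ p * t₀ + ρ then η ((t - p * t₀) / ρ)
  else γ ((t - ρ) / p)

section

variable {γa γa' γb γb' : ℝ → ℝ} {h t₀ p ρ : ℝ}

lemma isPrimitiveOn_splice (ha : Admissible γa γa') (hb : Admissible γb γb')
    (ht₀ : t₀ ∈ Icc (0:ℝ) 1) (hbt₀ : γb t₀ = h) (hp : 0 < p) (hρ : 0 < ρ) (hpρ : p + ρ = 1) :
    IsPrimitiveOn (splice γb (fun t => γa t + h) t₀ p ρ)
      (splice (fun t => γb' t / p) (fun t => γa' t / ρ) t₀ p ρ) 0 1 := by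
  have hA : IsPrimitiveOn (fun t => γb (t / p)) (fun t => γb' (t / p) / p) 0 (p * t₀) := by
    simpa using IsPrimitiveOn.comp_affine (a := 0) (b := p * t₀) (x := 0)
      (hb.isPrimitiveOn.mono (by simp) (by simpa [hp.ne'] using ht₀)) hp
  have hB : IsPrimitiveOn (fun t => γa ((t - p * t₀) / ρ) + h)
      (fun t => γa' ((t - p * t₀) / ρ) / ρ) (p * t₀) (p * t₀ + ρ) :=
    ((ha.isPrimitiveOn.add_const h).mono (by simp) (by simp [hρ.ne'])).comp_affine hρ
  have hC : IsPrimitiveOn (fun t => γb ((t - ρ) / p)) (fun t => γb' ((t - ρ) / p) / p)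
      (p * t₀ + ρ) 1 :=
    (hb.isPrimitiveOn.mono (by simpa [hp.ne'] using ht₀)
      (by rw [show 1 - ρ = p by linarith, div_self hp.ne']; exact right_mem_Icc.2 zero_le_one)
      ).comp_affine hp
  exact hA.ite (hB.ite hC (by linarith) (by nlinarith [ht₀.2])
    (by simp [hρ.ne', hp.ne', ha.2.2.2.2, hbt₀])) (mul_nonneg hp.le ht₀.1) (by nlinarith [ht₀.2])
    (by simp [hp.ne', hρ.le, hbt₀, ha.2.2.2.1])

lemma admissible_splice (ha : Admissible γa γa') (hb : Admissible γb γb')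
    (hlow : ∀ t ∈ Icc (0:ℝ) 1, γa t ≤ 1 - h) (ht₀ : t₀ ∈ Icc (0:ℝ) 1) (hbt₀ : γb t₀ = h)
    (hh : 0 < h) (hp : 0 < p) (hρ : 0 < ρ) (hpρ : p + ρ = 1) :
    Admissible (splice γb (fun t => γa t + h) t₀ p ρ)
      (splice (fun t => γb' t / p) (fun t => γa' t / ρ) t₀ p ρ) := by
  have ht₀1 : t₀ < 1 := ht₀.2.lt_of_ne (by rintro rfl; linarith [hb.2.2.2.2])
  have hpt₀ : p * t₀ + ρ < 1 := by nlinarith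
  refine (isPrimitiveOn_splice ha hb ht₀ hbt₀ hp hρ hpρ).admissible (fun t ht => ?_)
    (by simp [splice, mul_nonneg hp.le ht₀.1, hb.2.2.2.1])
    (by simp [splice, not_le.2 hpt₀, (show p * t₀ < 1 by linarith), show 1 - ρ = p by linarith,
      hp.ne', hb.2.2.2.2])
  unfold splice
  split_ifs with h₁ h₂
  · exact hb.mapsTo ⟨div_nonneg ht.1 hp.le, (div_le_one hp).2 (by nlinarith)⟩
  · have hτ : (t - p * t₀) / ρ ∈ Icc (0:ℝ) 1 :=
      ⟨div_nonneg (by linarith) hρ.le, (div_le_one hρ).2 (by linarith)⟩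
    exact ⟨by linarith [(ha.mapsTo hτ).1], by linarith [hlow _ hτ]⟩
  · exact hb.mapsTo ⟨div_nonneg (by nlinarith [ht₀.1]) hp.le,
      (div_le_one hp).2 (by linarith [ht.2])⟩

lemma exists_splice_eq (hp : 0 < p) (hρ : 0 < ρ) (hpρ : p + ρ = 1)
    {η : ℝ → ℝ} {t : ℝ} (ht : t ∈ Icc (0:ℝ) 1) :
    ∃ u ∈ Icc (0:ℝ) 1, splice γb η t₀ p ρ u = γb t := by
  rcases le_or_gt t t₀ with h₁ | h₁
  · refine ⟨p * t, ⟨mul_nonneg hp.le ht.1, by nlinarith [ht.2]⟩, ?_⟩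
    simp [splice, mul_le_mul_of_nonneg_left h₁ hp.le, hp.ne']
  · have : p * t₀ < p * t := mul_lt_mul_of_pos_left h₁ hp
    refine ⟨p * t + ρ, ⟨by nlinarith [ht.1], by nlinarith [ht.2]⟩, ?_⟩
    simp [splice, not_le.2 (show p * t₀ < p * t + ρ by linarith), this, hp.ne']

lemma energy_splice (hf : ContinuousOn f₁ (Icc 0 1)) (ha : Admissible γa γa')
    (hb : Admissible γb γb') (hlow : ∀ t ∈ Icc (0:ℝ) 1, γa t ≤ 1 - h) (ht₀ : t₀ ∈ Icc (0:ℝ) 1)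
    (hbt₀ : γb t₀ = h) (hh : 0 < h) (hp : 0 < p) (hρ : 0 < ρ) (hpρ : p + ρ = 1) (S : ℝ) :
    energy f₁ S (splice γb (fun t => γa t + h) t₀ p ρ)
      (splice (fun t => γb' t / p) (fun t => γa' t / ρ) t₀ p ρ) =
    energy f₁ (S * p) γb γb' + energy f₁ (S * ρ) (fun t => γa t + h) γa' := by
  have hadm := admissible_splice ha hb hlow ht₀ hbt₀ hh hp hρ hpρ
  have hI := hadm.isPrimitiveOn.intervalIntegrable_energyDensity hf zero_le_one hadm.mapsTo S
  have hIb := hb.isPrimitiveOn.intervalIntegrable_energyDensity hf zero_le_one hb.mapsTo (S * p)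
  have hu₀ : p * t₀ ∈ Icc (0:ℝ) 1 := ⟨mul_nonneg hp.le ht₀.1, by nlinarith [ht₀.2]⟩
  have hu₁ : p * t₀ + ρ ∈ Icc (0:ℝ) 1 := ⟨by linarith [hu₀.1], by nlinarith [ht₀.2]⟩
  set Γ := splice γb (fun t => γa t + h) t₀ p ρ
  set Γ' := splice (fun t => γb' t / p) (fun t => γa' t / ρ) t₀ p ρ
  have e₁ : ∫ t in (0:ℝ)..p * t₀, energyDensity f₁ S Γ Γ' t =
      ∫ t in (0:ℝ)..t₀, energyDensity f₁ (S * p) γb γb' t := by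
    rw [integral_energyDensity_eq_of_eqOn_comp_affine (γ := γb) (γ' := γb') (x := 0) hp hu₀.1
      (fun t ht => by simp [Γ, splice, ht.2.le]) (fun t ht => by simp [Γ', splice, ht.2.le])]
    simp [hp.ne']
  have e₂ : ∫ t in p * t₀..p * t₀ + ρ, energyDensity f₁ S Γ Γ' t =
      ∫ t in (0:ℝ)..1, energyDensity f₁ (S * ρ) (fun t => γa t + h) γa' t := by
    rw [integral_energyDensity_eq_of_eqOn_comp_affine (γ := fun t => γa t + h) (γ' := γa')
      (x := p * t₀) hρ (by linarith)
      (fun t ht => by simp [Γ, splice, not_le.2 ht.1, ht.2.le])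
      (fun t ht => by simp [Γ', splice, not_le.2 ht.1, ht.2.le])]
    simp [hρ.ne']
  have e₃ : ∫ t in p * t₀ + ρ..1, energyDensity f₁ S Γ Γ' t =
      ∫ t in t₀..1, energyDensity f₁ (S * p) γb γb' t := by
    have hlt : ∀ t ∈ Ioo (p * t₀ + ρ) 1, p * t₀ < t := fun t ht => by linarith [ht.1]
    rw [integral_energyDensity_eq_of_eqOn_comp_affine (γ := γb) (γ' := γb') (x := ρ) hp hu₁.2
      (fun t ht => by simp [Γ, splice, not_le.2 ht.1, not_le.2 (hlt t ht)])
      (fun t ht => by simp [Γ', splice, not_le.2 ht.1, not_le.2 (hlt t ht)])]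
    simp [hp.ne', show 1 - ρ = p by linarith]
  rw [energy_eq_integral, energy_eq_integral, energy_eq_integral, ← hI.integral_add_adjacent hu₁,
    ← (hI.mono_Icc ⟨le_rfl, zero_le_one⟩ hu₁).integral_add_adjacent ⟨hu₀.1, by linarith⟩,
    ← hIb.integral_add_adjacent ht₀, e₁, e₂, e₃]
  ring

end

end Splice

section Subadditivity

variable {ℓ ℓ₁ : ℝ} {f₁ γa γa' γb γb' : ℝ → ℝ} {c h : ℝ}

lemma gc_le_energy_add_energy_add_const (hf : ContinuousOn f₁ (Icc 0 1))
    (ha : Admissible γa γa') (hb : Admissible γb γb') (hh : 0 < h) (hhc : h ≤ c)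
    (hlow : ∀ t ∈ Icc (0:ℝ) 1, γa t ≤ 1 - h) (hbc : ∃ t ∈ Icc (0:ℝ) 1, c ≤ γb t)
    {p ρ : ℝ} (hp : 0 < p) (hρ : 0 < ρ) (hpρ : p + ρ = 1) (S : ℝ) :
    gc f₁ c S ≤ energy f₁ (S * p) γb γb' + energy f₁ (S * ρ) (fun t => γa t + h) γa' := by
  obtain ⟨tm, htm, hctm⟩ := hbc
  obtain ⟨t₀, ht₀, hbt₀⟩ := hb.exists_eq htm ⟨hh.le, hhc.trans hctm⟩
  obtain ⟨u, hu, hΓu⟩ := exists_splice_eq (γb := γb) (η := fun t => γa t + h) hp hρ hpρ htm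
  rw [← energy_splice hf ha hb hlow ht₀ hbt₀ hh hp hρ hpρ S]
  exact gc_le_energy (admissible_splice ha hb hlow ht₀ hbt₀ hh hp hρ hpρ) hu (hΓu ▸ hctm) S

lemma exists_pos_gc_add_le_energy_add_energy (hf : F1Hyp ℓ ℓ₁ f₁) (hh : 0 < h) (hhc : h ≤ c)
    (hc : c ≤ 1) {s₁ s₂ M : ℝ} (hs₁ : 0 < s₁) (hs₂ : 0 ≤ s₂) (hM : 0 < M) :
    ∃ κ > 0, ∀ γa γa' γb γb' : ℝ → ℝ, Admissible γa γa' → (∀ t ∈ Icc (0:ℝ) 1, γa t ≤ 1 - h) →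
      energy f₁ s₁ γa γa' ≤ M → Admissible γb γb' → (∃ t ∈ Icc (0:ℝ) 1, c ≤ γb t) →
      gc f₁ c (s₁ + s₂) + κ ≤ energy f₁ s₁ γa γa' + energy f₁ s₂ γb γb' := by
  obtain ⟨δ, hδ, hgap⟩ := hf.exists_pos_le_sq_sub_sq hh (hhc.trans hc)
  set κ := s₁ ^ 2 * δ / (2 * M)
  have hκ : 0 < κ := by positivity
  set σ := min (s₁ / 2) (κ / (2 * ℓ))
  have hσ : 0 < σ := lt_min (by linarith) (div_pos hκ (by linarith [hf.hl]))
  have hσs₁ : σ < s₁ := (min_le_left _ _).trans_lt (by linarith)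
  have hσℓ : σ * ℓ ≤ κ / 2 := by
    have := (le_div_iff₀ (by linarith [hf.hl])).1 (min_le_right (s₁ / 2) (κ / (2 * ℓ)))
    linarith
  refine ⟨κ / 2, by positivity, fun γa γa' γb γb' ha hlow hE hb hbc => ?_⟩
  have hS : 0 < s₁ + s₂ := by linarith
  have hsplit := gc_le_energy_add_energy_add_const hf.cont ha hb hh hhc hlow hbc
    (div_pos (by linarith) hS) (div_pos (by linarith) hS)
    (by field_simp; ring) (s₁ + s₂) (p := (s₂ + σ) / (s₁ + s₂)) (ρ := (s₁ - σ) / (s₁ + s₂))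
  rw [mul_div_cancel₀ _ hS.ne', mul_div_cancel₀ _ hS.ne'] at hsplit
  have hmaps : MapsTo γa (Icc 0 1) (Icc 0 (1 - h)) := fun t ht => ⟨(ha.mapsTo ht).1, hlow t ht⟩
  have hlift := energy_add_const_add_le hf.cont ha.isPrimitiveOn hh.le hmaps hδ.le
    (fun t ht => hgap _ (hmaps ht)) hM hE
  have hmono := energy_le_energy_of_le hf.cont (ha.isPrimitiveOn.add_const h)
    (fun t ht => ⟨by linarith [(hmaps ht).1], by linarith [(hmaps ht).2]⟩)
    (sub_nonneg.2 hσs₁.le) (sub_le_self s₁ hσ.le) (γ' := γa')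
  have hshift := energy_add_le hf hb.isPrimitiveOn hb.mapsTo hσ.le (s := s₂) (γ' := γb')
  linarith

end Subadditivity

/-- strict subadditivity of the constrained density against the pristine one:
for `c ∈ (0,1]`, `s₁ > 0`, `s₂ ≥ 0`, `g_c(s₁+s₂) < g₀(s₁) + g_c(s₂)`. -/
theorem stmt_19 (ℓ ℓ₁ : ℝ) (f₁ : ℝ → ℝ) (hf : F1Hyp ℓ ℓ₁ f₁)
    (c : ℝ) (hc : c ∈ Ioc (0:ℝ) 1) (s₁ s₂ : ℝ) (h1 : 0 < s₁) (h2 : 0 ≤ s₂) :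
    gc f₁ c (s₁ + s₂) < g0 f₁ s₁ + gc f₁ c s₂ := by
  obtain ⟨hc0, hc1⟩ := hc
  obtain ⟨κ, hκ, hgain⟩ := exists_pos_gc_add_le_energy_add_energy hf (half_pos hc0)
    (half_le_self hc0.le) hc1 h1 h2 (M := g0 f₁ s₁ + 1)
    (by linarith [g0_nonneg (f₁ := f₁) (s := s₁)])
  obtain ⟨ε, hε, hεκ, hεc, hε1⟩ : ∃ ε > 0, 2 * ε ≤ κ ∧ 2 * ε ≤ c / 2 ∧ ε ≤ 1 :=
    ⟨min κ (min (c / 2) 1) / 2, by positivity, by linarith [min_le_left κ (min (c / 2) 1)],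
      by linarith [min_le_right κ (min (c / 2) 1), min_le_left (c / 2) 1],
      by linarith [min_le_right κ (min (c / 2) 1), min_le_right (c / 2) 1]⟩
  obtain ⟨γa, γa', ha, hEa⟩ := exists_admissible_energy_lt_g0_add (f₁ := f₁) (s := s₁) hε
  obtain ⟨γb, γb', hb, hbc, hEb⟩ := exists_admissible_energy_lt_gc_add (f₁ := f₁) (s := s₂) hc1 hε
  by_cases hlow : ∀ t ∈ Icc (0:ℝ) 1, γa t ≤ 1 - c / 2
  · linarith [hgain γa γa' γb γb' ha hlow (by linarith) hb hbc]
  · push Not at hlow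
    obtain ⟨t, ht, hγt⟩ := hlow
    obtain ⟨tb, htb, hctb⟩ := hbc
    linarith [ha.le_energy hf.cont ht s₁, hb.le_energy hf.cont htb s₂,
      gc_le_one hf hc1 (add_nonneg h1.le h2)]
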